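/- (Hermite interpolation via Petrov–Galerkin projection) Let E, A, Q ∈ ℂ^{n×n} with Q Hermitian, b ∈ ℂ^n, and z₀ = iω₀ ∈ iℝ with z₀E − A invertible. Let V, W ∈ ℂ^{n×r} be such that W^H(z₀E−A)V is invertible, (z₀E − A)^{-1} b ∈ range(V), and (z₀E − A)^{-H} Q (z₀E − A)^{-1} b ∈ range(W); assume V has orthonormal columns and W has full column rank. Define the reduced model Ê = W^H E V, Â = W^H A V, Q̂ = V^H Q V, b̂ = W^H b, and the transfer functions H(iω) = b^H(iωE−A)^{-H}Q(iωE−A)^{-1}b and Ĥ(iω) analogously. Then both H(iω₀) = Ĥ(iω₀) and (d/dω)H(iω)|_{ω=ω₀} = (d/dω)Ĥ(iω)|_{ω=ω₀}. -/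

import Mathlib

/-!
With `v = (z₀E - A)⁻¹ b` and `w = (z₀E - A)⁻ᴴ Q v`, the value of the transfer function is
`vᴴ Q v` and its derivative along the imaginary axis is `i (vᴴ Eᴴ w - wᴴ E v)`; the reduced
model has the same formulas with `v̂, ŵ`. A Petrov–Galerkin solve is exact on its trial space,
so `v ∈ range V` gives `V v̂ = v`, and then `w ∈ range W` gives `W ŵ = w` for the dual solve.
Since `Ê = Wᴴ E V` and `Q̂ = Vᴴ Q V`, each reduced term equals the corresponding full one.
-/

open Matrix

section Projection

variable {ι ι' κ κ' R : Type*} [Fintype ι] [Fintype ι'] [Fintype κ] [Fintype κ'] [CommRing R]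

theorem star_mulVec_dotProduct [StarRing R] (L : Matrix ι κ R) (x : κ → R) (y : ι → R) :
    star (L *ᵥ x) ⬝ᵥ y = star x ⬝ᵥ Lᴴ *ᵥ y := by
  rw [dotProduct_mulVec, star_mulVec]

theorem star_dotProduct_conjTranspose_mul_mul_mulVec [StarRing R] (L : Matrix ι κ R)
    (X : Matrix ι ι' R) (M : Matrix ι' κ' R) (x : κ → R) (y : κ' → R) :
    star x ⬝ᵥ (Lᴴ * X * M) *ᵥ y = star (L *ᵥ x) ⬝ᵥ X *ᵥ (M *ᵥ y) := by
  rw [← mulVec_mulVec, ← mulVec_mulVec, star_mulVec_dotProduct]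

theorem galerkin_solve_eq [DecidableEq κ] {M : Matrix ι ι R} {V : Matrix ι κ R}
    (L : Matrix κ ι R) (hK : IsUnit (L * M * V).det) {c : κ → R} {x y : ι → R}
    (hc : V *ᵥ c = x) (hx : M *ᵥ x = y) : V *ᵥ ((L * M * V)⁻¹ *ᵥ (L *ᵥ y)) = x := by
  have hLy : L *ᵥ y = (L * M * V) *ᵥ c := by
    simp only [← hx, ← hc, mulVec_mulVec, Matrix.mul_assoc]
  rw [hLy, mulVec_mulVec c, nonsing_inv_mul _ hK, one_mulVec, hc]

end Projection

section Transfer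

variable {ι κ : Type*}

def pencil (E A : Matrix ι ι ℂ) (ω : ℝ) : Matrix ι ι ℂ := (Complex.I * ω) • E - A

variable [Fintype ι]

theorem pencil_conjTranspose_mul_mul (E A : Matrix ι ι ℂ) (W V : Matrix ι κ ℂ) (ω : ℝ) :
    pencil (Wᴴ * E * V) (Wᴴ * A * V) ω = Wᴴ * pencil E A ω * V := by
  simp only [pencil, Matrix.mul_sub, Matrix.sub_mul, Matrix.mul_smul, Matrix.smul_mul]

variable [DecidableEq ι]

noncomputable def transferFn (E A Q : Matrix ι ι ℂ) (b : ι → ℂ) (ω : ℝ) : ℂ :=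
  star b ⬝ᵥ ((pencil E A ω)ᴴ⁻¹ * Q * (pencil E A ω)⁻¹) *ᵥ b

noncomputable def primal (E A : Matrix ι ι ℂ) (b : ι → ℂ) (ω : ℝ) : ι → ℂ :=
  (pencil E A ω)⁻¹ *ᵥ b

noncomputable def dual (E A Q : Matrix ι ι ℂ) (b : ι → ℂ) (ω : ℝ) : ι → ℂ :=
  (pencil E A ω)ᴴ⁻¹ *ᵥ (Q *ᵥ primal E A b ω)

theorem transferFn_eq_primal (E A Q : Matrix ι ι ℂ) (b : ι → ℂ) (ω : ℝ) :
    transferFn E A Q b ω = star (primal E A b ω) ⬝ᵥ Q *ᵥ primal E A b ω := by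
  rw [transferFn, primal, ← conjTranspose_nonsing_inv,
    star_dotProduct_conjTranspose_mul_mul_mulVec]

theorem pencil_mulVec_primal {E A : Matrix ι ι ℂ} (b : ι → ℂ) {ω : ℝ}
    (h : IsUnit (pencil E A ω).det) : pencil E A ω *ᵥ primal E A b ω = b := by
  rw [primal, mulVec_mulVec, mul_nonsing_inv _ h, one_mulVec]

theorem conjTranspose_pencil_mulVec_dual {E A : Matrix ι ι ℂ} (Q : Matrix ι ι ℂ) (b : ι → ℂ)
    {ω : ℝ} (h : IsUnit (pencil E A ω).det) :
    (pencil E A ω)ᴴ *ᵥ dual E A Q b ω = Q *ᵥ primal E A b ω := by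
  rw [dual, mulVec_mulVec, mul_nonsing_inv _ (by rw [det_conjTranspose]; exact h.star),
    one_mulVec]

variable [Fintype κ] [DecidableEq κ]

theorem mulVec_primal_reduce {E A : Matrix ι ι ℂ} {b : ι → ℂ} {W V : Matrix ι κ ℂ} {ω : ℝ}
    (h : IsUnit (pencil E A ω).det) (hred : IsUnit (Wᴴ * pencil E A ω * V).det)
    (hV : ∃ c, V *ᵥ c = primal E A b ω) :
    V *ᵥ primal (Wᴴ * E * V) (Wᴴ * A * V) (Wᴴ *ᵥ b) ω = primal E A b ω := by
  obtain ⟨c, hc⟩ := hV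
  rw [primal, pencil_conjTranspose_mul_mul]
  exact galerkin_solve_eq Wᴴ hred hc (pencil_mulVec_primal b h)

theorem mulVec_dual_reduce {E A : Matrix ι ι ℂ} (Q : Matrix ι ι ℂ) {b : ι → ℂ}
    {W V : Matrix ι κ ℂ} {ω : ℝ} (h : IsUnit (pencil E A ω).det)
    (hred : IsUnit (Wᴴ * pencil E A ω * V).det) (hV : ∃ c, V *ᵥ c = primal E A b ω)
    (hW : ∃ d, W *ᵥ d = dual E A Q b ω) :
    W *ᵥ dual (Wᴴ * E * V) (Wᴴ * A * V) (Vᴴ * Q * V) (Wᴴ *ᵥ b) ω = dual E A Q b ω := by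
  obtain ⟨d, hd⟩ := hW
  have hredH : IsUnit (Vᴴ * (pencil E A ω)ᴴ * W).det := by
    have h := hred.star
    rwa [← det_conjTranspose, conjTranspose_mul, conjTranspose_mul, conjTranspose_conjTranspose,
      ← Matrix.mul_assoc] at h
  have hQV : (Vᴴ * Q * V) *ᵥ primal (Wᴴ * E * V) (Wᴴ * A * V) (Wᴴ *ᵥ b) ω
      = Vᴴ *ᵥ (Q *ᵥ primal E A b ω) := by
    rw [← mulVec_primal_reduce h hred hV, mulVec_mulVec, mulVec_mulVec, Matrix.mul_assoc]
  rw [dual, hQV, pencil_conjTranspose_mul_mul, conjTranspose_mul, conjTranspose_mul,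
    conjTranspose_conjTranspose, ← Matrix.mul_assoc]
  exact galerkin_solve_eq Vᴴ hredH hd (conjTranspose_pencil_mulVec_dual Q b h)

end Transfer

section MatrixCalculus

attribute [local instance] Matrix.linftyOpNormedAddCommGroup Matrix.linftyOpNormedRing
  Matrix.linftyOpNormedAlgebra

variable {ι 𝕜 𝔸 : Type*} [Fintype ι] [DecidableEq ι] [NontriviallyNormedField 𝕜]
  [RCLike 𝔸] [NormedAlgebra 𝕜 𝔸]

theorem HasDerivAt.matrix_inv {f : 𝕜 → Matrix ι ι 𝔸} {f' : Matrix ι ι 𝔸} {t : 𝕜}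
    (hf : HasDerivAt f f' t) (ht : IsUnit (f t).det) :
    HasDerivAt (fun s => (f s)⁻¹) (-((f t)⁻¹ * f' * (f t)⁻¹)) t := by
  obtain ⟨u, hu⟩ := (isUnit_iff_isUnit_det _).mpr ht
  have h := hasFDerivAt_ringInverse (𝕜 := 𝕜) u
  rw [← Ring.inverse_unit, hu] at h
  simp only [nonsing_inv_eq_ringInverse]
  exact h.comp_hasDerivAt t hf

theorem HasDerivAt.dotProduct_mulVec {G : 𝕜 → Matrix ι ι 𝔸} {G' : Matrix ι ι 𝔸} {t : 𝕜}
    (hG : HasDerivAt G G' t) (x y : ι → 𝔸) :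
    HasDerivAt (fun s => x ⬝ᵥ G s *ᵥ y) (x ⬝ᵥ G' *ᵥ y) t := by
  let L : Matrix ι ι 𝔸 →ₗ[𝔸] 𝔸 :=
    { toFun := fun X => x ⬝ᵥ X *ᵥ y
      map_add' := fun X Y => by simp only [add_mulVec, dotProduct_add]
      map_smul' := fun c X => by simp only [smul_mulVec, dotProduct_smul, RingHom.id_apply] }
  exact (L.toContinuousLinearMap.restrictScalars 𝕜).hasFDerivAt.comp_hasDerivAt t hG

theorem hasDerivAt_pencil (E A : Matrix ι ι ℂ) (ω : ℝ) :
    HasDerivAt (pencil E A) (Complex.I • E) ω := by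
  have h := (((hasDerivAt_id ω).ofReal_comp.const_mul Complex.I).smul_const E).sub_const A
  rw [Complex.ofReal_one, mul_one] at h
  exact h

theorem hasDerivAt_transferFn {E A Q : Matrix ι ι ℂ} (b : ι → ℂ) (hQ : Qᴴ = Q) {ω : ℝ}
    (h : IsUnit (pencil E A ω).det) :
    HasDerivAt (transferFn E A Q b)
      (Complex.I * (star (primal E A b ω) ⬝ᵥ Eᴴ *ᵥ dual E A Q b ω
        - star (dual E A Q b ω) ⬝ᵥ E *ᵥ primal E A b ω)) ω := by
  -- the `linftyOp` topology is the product topology, but not reducibly so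
  have : @ContinuousStar (Matrix ι ι ℂ) PseudoMetricSpace.toUniformSpace.toTopologicalSpace _ :=
    inferInstanceAs (ContinuousStar (Matrix ι ι ℂ))
  have hR := (hasDerivAt_pencil E A ω).matrix_inv h
  have hG := ((hR.star.mul_const Q).fun_mul hR).dotProduct_mulVec (star b) b
  have hfun : transferFn E A Q b
      = fun s => star b ⬝ᵥ (star (pencil E A s)⁻¹ * Q * (pencil E A s)⁻¹) *ᵥ b := by
    funext s
    rw [transferFn, star_eq_conjTranspose, conjTranspose_nonsing_inv]
  rw [hfun]
  refine hG.congr_deriv ?_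
  simp only [primal, dual, ← conjTranspose_nonsing_inv, star_eq_conjTranspose, conjTranspose_neg,
    conjTranspose_mul, conjTranspose_smul, Complex.star_def, Complex.conj_I, add_mulVec,
    neg_mulVec, smul_mulVec, ← mulVec_mulVec, mulVec_smul, mulVec_neg, dotProduct_add,
    dotProduct_neg, dotProduct_smul, star_mulVec_dotProduct, conjTranspose_conjTranspose, hQ,
    smul_eq_mul]
  ring

end MatrixCalculus

theorem hermite_interpolation_quadratic_output_general (n r : ℕ)
    (E A Q : Matrix (Fin n) (Fin n) ℂ) (b : Fin n → ℂ) (hQ : Qᴴ = Q)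
    (ω₀ : ℝ) (hpencil : IsUnit ((Complex.I * ω₀) • E - A).det)
    (V W : Matrix (Fin n) (Fin r) ℂ)
    (hred : IsUnit (Wᴴ * ((Complex.I * ω₀) • E - A) * V).det)
    (hrangeV : ∃ c : Fin r → ℂ,
      V.mulVec c = (((Complex.I * ω₀) • E - A)⁻¹).mulVec b)
    (hrangeW : ∃ c : Fin r → ℂ,
      W.mulVec c = ((((Complex.I * ω₀) • E - A)ᴴ)⁻¹).mulVec
        (Q.mulVec ((((Complex.I * ω₀) • E - A)⁻¹).mulVec b)))
    (Ehat Ahat Qhat : Matrix (Fin r) (Fin r) ℂ) (bhat : Fin r → ℂ)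
    (hE : Ehat = Wᴴ * E * V) (hA : Ahat = Wᴴ * A * V)
    (hQhat : Qhat = Vᴴ * Q * V) (hb : bhat = Wᴴ.mulVec b)
    (H Hhat : ℝ → ℂ)
    (hH : ∀ ω : ℝ, H ω = star b ⬝ᵥ
      (((((Complex.I * ω) • E - A)ᴴ)⁻¹ * Q * ((Complex.I * ω) • E - A)⁻¹)).mulVec b)
    (hHhat : ∀ ω : ℝ, Hhat ω = star bhat ⬝ᵥ
      (((((Complex.I * ω) • Ehat - Ahat)ᴴ)⁻¹ * Qhat *
        ((Complex.I * ω) • Ehat - Ahat)⁻¹)).mulVec bhat) :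
    H ω₀ = Hhat ω₀ ∧ deriv H ω₀ = deriv Hhat ω₀ := by
  obtain rfl : H = transferFn E A Q b := funext hH
  obtain rfl : Hhat = transferFn Ehat Ahat Qhat bhat := funext hHhat
  subst hE hA hQhat hb
  have hv := mulVec_primal_reduce hpencil hred hrangeV
  have hw := mulVec_dual_reduce Q hpencil hred hrangeV hrangeW
  have hredPencil : IsUnit (pencil (Wᴴ * E * V) (Wᴴ * A * V) ω₀).det := by
    rwa [pencil_conjTranspose_mul_mul]
  have hQhatH : (Vᴴ * Q * V)ᴴ = Vᴴ * Q * V := by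
    rw [conjTranspose_mul, conjTranspose_mul, conjTranspose_conjTranspose, hQ, Matrix.mul_assoc]
  refine ⟨?_, ?_⟩
  · rw [transferFn_eq_primal, transferFn_eq_primal,
      star_dotProduct_conjTranspose_mul_mul_mulVec, hv]
  · rw [(hasDerivAt_transferFn b hQ hpencil).deriv,
      (hasDerivAt_transferFn _ hQhatH hredPencil).deriv, conjTranspose_mul, conjTranspose_mul,
      conjTranspose_conjTranspose, ← Matrix.mul_assoc, star_dotProduct_conjTranspose_mul_mul_mulVec,
      star_dotProduct_conjTranspose_mul_mul_mulVec, hv, hw]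

/-- Hermite interpolation via Petrov–Galerkin projection:
under the two range containments at `z₀ = iω₀`, with `V` orthonormal and `W`
injective, the reduced transfer function matches the full one at `z₀` in value
and in derivative along the imaginary axis. -/
theorem hermite_interpolation_quadratic_output (n r : ℕ)
    (E A Q : Matrix (Fin n) (Fin n) ℂ) (b : Fin n → ℂ) (hQ : Qᴴ = Q)
    (ω₀ : ℝ) (hpencil : IsUnit ((Complex.I * ω₀) • E - A).det)
    (V W : Matrix (Fin n) (Fin r) ℂ)
    (hred : IsUnit (Wᴴ * ((Complex.I * ω₀) • E - A) * V).det)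
    (hrangeV : ∃ c : Fin r → ℂ,
      V.mulVec c = (((Complex.I * ω₀) • E - A)⁻¹).mulVec b)
    (hrangeW : ∃ c : Fin r → ℂ,
      W.mulVec c = ((((Complex.I * ω₀) • E - A)ᴴ)⁻¹).mulVec
        (Q.mulVec ((((Complex.I * ω₀) • E - A)⁻¹).mulVec b)))
    (hVorth : Vᴴ * V = 1) (hWinj : Function.Injective W.mulVec)
    (Ehat Ahat Qhat : Matrix (Fin r) (Fin r) ℂ) (bhat : Fin r → ℂ)
    (hE : Ehat = Wᴴ * E * V) (hA : Ahat = Wᴴ * A * V)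
    (hQhat : Qhat = Vᴴ * Q * V) (hb : bhat = Wᴴ.mulVec b)
    (H Hhat : ℝ → ℂ)
    (hH : ∀ ω : ℝ, H ω = star b ⬝ᵥ
      (((((Complex.I * ω) • E - A)ᴴ)⁻¹ * Q * ((Complex.I * ω) • E - A)⁻¹)).mulVec b)
    (hHhat : ∀ ω : ℝ, Hhat ω = star bhat ⬝ᵥ
      (((((Complex.I * ω) • Ehat - Ahat)ᴴ)⁻¹ * Qhat *
        ((Complex.I * ω) • Ehat - Ahat)⁻¹)).mulVec bhat) :
    H ω₀ = Hhat ω₀ ∧ deriv H ω₀ = deriv Hhat ω₀ :=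
  hermite_interpolation_quadratic_output_general n r E A Q b hQ ω₀ hpencil V W hred hrangeV hrangeW
    Ehat Ahat Qhat bhat hE hA hQhat hb H Hhat hH hHhat
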